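/- arXiv:1305.1502 — 2 statements merged into one kernel-verified Lean document; each statement's English description precedes it below -/
import Mathlib

section
/- Let G_d=(V_d,E_d) be a finite simple graph with nonnegative interest scores η and nonnegative social tightness scores τ, let k ≤ |V_d|, and let G be the augmented graph obtained from G_d by adding a new node v̄ with interest score η_v̄ = ε + Σ_{v_i∈V_d}(η_i + Σ_{v_j∈V_d: e_{i,j}∈E_d} τ_{i,j}) for some ε > 0, adding an edge between v̄ and every node of V_d with social tightness score 0 in both directions. Then every (k+1)-node subset of G containing v̄ has strictly larger willingness than every (k+1)-node subset of V_d not containing v̄; consequently, every optimal (k+1)-node connected solution of WASO on G contains v̄. -/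
open Finset

open scoped Classical in
/-- The willingness `W(F) = Σ_{v_i∈F} (η_i + Σ_{v_j∈F, e_{i,j}∈E} τ_{i,j})` of a
subset `F` of nodes of a graph `G` with interest scores `η` and social tightness
scores `τ`. -/
noncomputable def willingness {V : Type*} (G : SimpleGraph V) (η : V → ℝ)
    (τ : V → V → ℝ) (F : Finset V) : ℝ :=
  ∑ i ∈ F, (η i + ∑ j ∈ F.filter (fun j => G.Adj i j), τ i j)

/-- The graph obtained from `G` by adding a new node `v̄` (modeled as `none`)
adjacent to every node of `G` (the nodes `some v`). -/
def augment {V : Type*} (G : SimpleGraph V) : SimpleGraph (Option V) :=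
  SimpleGraph.fromRel (fun a b =>
    a = none ∨ ∃ u v, a = some u ∧ b = some v ∧ G.Adj u v)

/-- Extending the social tightness scores to the augmented graph: score `0` on
both orientations of every new edge. -/
def augTau {V : Type*} (τ : V → V → ℝ) : Option V → Option V → ℝ :=
  fun a b => match a, b with
    | some u, some v => τ u v
    | _, _ => 0


open scoped Classical in
/-- The interest score of the augmented graph: the new node `v̄` gets score
`ε + Σ_{v_i∈V_d}(η_i + Σ_{v_j : e_{i,j}∈E_d} τ_{i,j})`, all other nodes keep
their score. -/
noncomputable def augEta {V : Type*} [Fintype V] (G : SimpleGraph V) (η : V → ℝ)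
    (τ : V → V → ℝ) (ε : ℝ) : Option V → ℝ :=
  fun a => a.elim
    (ε + ∑ i, (η i + ∑ j ∈ Finset.univ.filter (fun j => G.Adj i j), τ i j)) η

/-!
The new node alone already outweighs the whole original graph: its interest score exceeds
`W(V_d)` by `ε`. Since all scores are nonnegative, willingness is monotone under inclusion, so
any set containing `v̄` weighs at least `W({v̄}) = W(V_d) + ε`, while any set avoiding `v̄` is a
subset of `V_d` and weighs at most `W(V_d)`. For the second claim, `v̄` together with any `k`
original nodes is a connected `(k+1)`-set (a star centred at `v̄`), which then beats every
optimum avoiding `v̄`.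
-/

namespace SimpleGraph

variable {V : Type*}

theorem connected_of_forall_ne_adj (G : SimpleGraph V) (v : V) (h : ∀ w, w ≠ v → G.Adj v w) :
    G.Connected := by
  refine G.connected_iff_exists_forall_reachable.2 ⟨v, fun w => ?_⟩
  by_cases hw : w = v
  · exact hw ▸ Reachable.refl w
  · exact (h w hw).reachable

end SimpleGraph

section Willingness

variable {V : Type*} (G : SimpleGraph V) {η : V → ℝ} {τ : V → V → ℝ}

theorem willingness_monotone (hη : ∀ v, 0 ≤ η v) (hτ : ∀ u v, G.Adj u v → 0 ≤ τ u v) :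
    Monotone (willingness G η τ) := by
  classical
  intro s t hst
  have hτ' : ∀ (u : V) (r : Finset V), ∀ v ∈ r.filter (G.Adj u), 0 ≤ τ u v :=
    fun u r v hv => hτ u v (mem_filter.1 hv).2
  unfold willingness
  calc ∑ i ∈ s, (η i + ∑ j ∈ s.filter (G.Adj i), τ i j)
      ≤ ∑ i ∈ s, (η i + ∑ j ∈ t.filter (G.Adj i), τ i j) := by
        gcongr with i
        exact fun j hj _ => hτ' i t j hj
    _ ≤ ∑ i ∈ t, (η i + ∑ j ∈ t.filter (G.Adj i), τ i j) :=
        sum_le_sum_of_subset_of_nonneg hst fun i _ _ => add_nonneg (hη i) (sum_nonneg (hτ' i t))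

theorem willingness_nonneg (hη : ∀ v, 0 ≤ η v) (hτ : ∀ u v, G.Adj u v → 0 ≤ τ u v)
    (s : Finset V) : 0 ≤ willingness G η τ s := by
  simpa [willingness] using willingness_monotone G hη hτ (empty_subset s)

end Willingness

section Augment

variable {V : Type*} (G : SimpleGraph V)

@[simp]
theorem augment_adj_some_some {u v : V} : (augment G).Adj (some u) (some v) ↔ G.Adj u v := by
  simp only [augment, SimpleGraph.fromRel_adj, Option.some.injEq, reduceCtorEq, false_or]
  constructor
  · rintro ⟨-, ⟨u', v', rfl, rfl, h⟩ | ⟨u', v', rfl, rfl, h⟩⟩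
    · exact h
    · exact h.symm
  · intro h
    exact ⟨by simpa using h.ne, Or.inl ⟨u, v, rfl, rfl, h⟩⟩

theorem augment_adj_none_some (v : V) : (augment G).Adj none (some v) := by
  simp [augment]

@[simp]
theorem augTau_none_left (τ : V → V → ℝ) (b : Option V) : augTau τ none b = 0 := by
  cases b <;> rfl

theorem augTau_nonneg {τ : V → V → ℝ} (hτ : ∀ u v, G.Adj u v → 0 ≤ τ u v) :
    ∀ a b, (augment G).Adj a b → 0 ≤ augTau τ a b
  | some u, some v, h => hτ u v ((augment_adj_some_some G).1 h)
  | none, _, _ | some _, none, _ => le_rfl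

theorem connected_induce_augment_of_none_mem {S : Finset (Option V)} (hS : none ∈ S) :
    ((augment G).induce (↑S : Set (Option V))).Connected := by
  refine SimpleGraph.connected_of_forall_ne_adj _ ⟨none, hS⟩ ?_
  rintro ⟨_ | v, hv⟩ hne
  · exact absurd rfl hne
  · exact augment_adj_none_some G v

variable [Fintype V] {η : V → ℝ} {τ : V → V → ℝ} {ε : ℝ}

theorem augEta_none : augEta G η τ ε none = ε + willingness G η τ univ := rfl

theorem augEta_nonneg (hη : ∀ v, 0 ≤ η v) (hτ : ∀ u v, G.Adj u v → 0 ≤ τ u v) (hε : 0 ≤ ε) :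
    ∀ a, 0 ≤ augEta G η τ ε a
  | none => add_nonneg hε (willingness_nonneg G hη hτ univ)
  | some v => hη v

theorem willingness_augment_singleton_none :
    willingness (augment G) (augEta G η τ ε) (augTau τ) {none} =
      ε + willingness G η τ univ := by
  simp [willingness, augEta_none]

theorem willingness_augment_map_some (s : Finset V) :
    willingness (augment G) (augEta G η τ ε) (augTau τ) (s.map .some) = willingness G η τ s := by
  classical
  simp only [willingness, sum_map, filter_map, Function.Embedding.some_apply]
  refine sum_congr rfl fun u _ => congrArg (η u + ·) (sum_congr ?_ fun v _ => rfl)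
  exact filter_congr fun v _ => augment_adj_some_some G

theorem willingness_augment_lt_of_none_mem (hη : ∀ v, 0 ≤ η v)
    (hτ : ∀ u v, G.Adj u v → 0 ≤ τ u v) (hε : 0 < ε) {S T : Finset (Option V)}
    (hS : none ∈ S) (hT : none ∉ T) :
    willingness (augment G) (augEta G η τ ε) (augTau τ) T <
      willingness (augment G) (augEta G η τ ε) (augTau τ) S := by
  have hT_sub : T ⊆ univ.map .some := by
    rintro (_ | v) hv
    · exact absurd hv hT
    · simp
  have mono :=
    willingness_monotone (augment G) (augEta_nonneg G hη hτ hε.le) (augTau_nonneg G hτ)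
  calc willingness (augment G) (augEta G η τ ε) (augTau τ) T
      ≤ willingness (augment G) (augEta G η τ ε) (augTau τ) (univ.map .some) := mono hT_sub
    _ = willingness G η τ univ := willingness_augment_map_some G univ
    _ < ε + willingness G η τ univ := lt_add_of_pos_left _ hε
    _ = willingness (augment G) (augEta G η τ ε) (augTau τ) {none} :=
        (willingness_augment_singleton_none G).symm
    _ ≤ willingness (augment G) (augEta G η τ ε) (augTau τ) S :=
        mono (singleton_subset_iff.2 hS)

theorem exists_card_eq_none_mem_connected_induce_augment {k : ℕ} (hk : k ≤ Fintype.card V) :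
    ∃ S : Finset (Option V), S.card = k + 1 ∧ none ∈ S ∧
      ((augment G).induce (↑S : Set (Option V))).Connected := by
  obtain ⟨U, -, hU⟩ := exists_subset_card_eq (s := (univ : Finset V)) hk
  have hS : none ∈ cons none (U.map .some) (by simp) := mem_cons_self _ _
  exact ⟨_, by rw [card_cons, card_map, hU], hS, connected_induce_augment_of_none_mem G hS⟩

end Augment

theorem stmt1_general {V : Type*} [Fintype V] (G : SimpleGraph V)
    (η : V → ℝ) (τ : V → V → ℝ)
    (hη : ∀ v, 0 ≤ η v) (hτ : ∀ u v, G.Adj u v → 0 ≤ τ u v)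
    (k : ℕ) (hk : k ≤ Fintype.card V) (ε : ℝ) (hε : 0 < ε) :
    (∀ S T : Finset (Option V), S.card = k + 1 → T.card = k + 1 →
        none ∈ S → none ∉ T →
        willingness (augment G) (augEta G η τ ε) (augTau τ) T <
          willingness (augment G) (augEta G η τ ε) (augTau τ) S) ∧
      ∀ F : Finset (Option V), F.card = k + 1 →
        ((augment G).induce (↑F : Set (Option V))).Connected →
        (∀ S : Finset (Option V), S.card = k + 1 →
            ((augment G).induce (↑S : Set (Option V))).Connected →
            willingness (augment G) (augEta G η τ ε) (augTau τ) S ≤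
              willingness (augment G) (augEta G η τ ε) (augTau τ) F) →
        none ∈ F := by
  have hlt {S T : Finset (Option V)} :=
    willingness_augment_lt_of_none_mem G hη hτ hε (S := S) (T := T)
  refine ⟨fun S T _ _ hS hT => hlt hS hT, fun F _ _ hopt => ?_⟩
  by_contra hF
  obtain ⟨S, hcard, hS, hconn⟩ := exists_card_eq_none_mem_connected_induce_augment G hk
  exact (hopt S hcard hconn).not_gt (hlt hS hF)

/-- In the augmented graph, every `(k+1)`-node subset containing `v̄` has strictly
larger willingness than every `(k+1)`-node subset not containing `v̄` (i.e. a
subset of `V_d`); consequently, every optimal `(k+1)`-node connected solution of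
WASO on the augmented graph contains `v̄`. -/
theorem stmt1 {V : Type*} [Fintype V] [DecidableEq V] (G : SimpleGraph V)
    (η : V → ℝ) (τ : V → V → ℝ)
    (hη : ∀ v, 0 ≤ η v) (hτ : ∀ u v, G.Adj u v → 0 ≤ τ u v)
    (k : ℕ) (hk : k ≤ Fintype.card V) (ε : ℝ) (hε : 0 < ε) :
    (∀ S T : Finset (Option V), S.card = k + 1 → T.card = k + 1 →
        none ∈ S → none ∉ T →
        willingness (augment G) (augEta G η τ ε) (augTau τ) T <
          willingness (augment G) (augEta G η τ ε) (augTau τ) S) ∧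
      ∀ F : Finset (Option V), F.card = k + 1 →
        ((augment G).induce (↑F : Set (Option V))).Connected →
        (∀ S : Finset (Option V), S.card = k + 1 →
            ((augment G).induce (↑S : Set (Option V))).Connected →
            willingness (augment G) (augEta G η τ ε) (augTau τ) S ≤
              willingness (augment G) (augEta G η τ ε) (augTau τ) F) →
        none ∈ F :=
  stmt1_general G η τ hη hτ k hk ε hε
end

section
/- Let N_b and N_i be positive integers and let reals satisfy c_i < c_b < d_i ≤ d_b with c_b < d_b. Let J_b* be the maximum of N_b i.i.d. random variables uniform on [c_b, d_b] and J_i* the maximum of N_i i.i.d. random variables uniform on [c_i, d_i], with all samples mutually independent. Then P(J_b* ≤ J_i*) = ((d_i − c_b)/(d_b − c_b))^{N_b} · (1 − ((c_b − c_i)/(d_i − c_i))^{N_i} · N_b · Σ_{q=0}^{N_i} C(N_i, q) · ((d_i − c_b)/(c_b − c_i))^q · 1/(N_b + q)). -/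
/-!
Condition on the value `t` of `J_b*`. By independence, `P(J_i* ≥ t) = 1 - F_i(t)^{N_i}`, where
`F_i` is the uniform distribution function on `[c_i, d_i]`, while `J_b*` has the density
`N_b (t - c_b)^{N_b - 1} / (d_b - c_b)^{N_b}` on `[c_b, d_b]`. The integrand vanishes for
`t ≥ d_i`, and on `[c_b, d_i]` the binomial expansion of
`(t - c_i)^{N_i} = ((t - c_b) + (c_b - c_i))^{N_i}` integrates term by term to the stated sum.
-/

open MeasureTheory

noncomputable def uniformIcc (c d : ℝ) : Measure ℝ :=
  (ENNReal.ofReal (d - c))⁻¹ • volume.restrict (Set.Icc c d)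

open Set

lemma Iic_inter_Icc_eq {α : Type*} [LinearOrder α] (s c d : α) :
    Iic s ∩ Icc c d = Icc c (min s d) := by
  ext; simp only [mem_inter_iff, mem_Iic, mem_Icc, le_min_iff]; tauto

lemma measurable_measure_Iio (ν : Measure ℝ) : Measurable fun t => ν (Iio t) :=
  Monotone.measurable fun _ _ hst => measure_mono (Iio_subset_Iio hst)

section MaxOfSamples

lemma measurable_iSup_fin {n : ℕ} : Measurable fun x : Fin n → ℝ => ⨆ j, x j :=
  Measurable.iSup fun j => measurable_pi_apply j

variable {n : ℕ} [NeZero n]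

lemma iSup_le_iff_of_fin {x : Fin n → ℝ} {t : ℝ} : (⨆ j, x j) ≤ t ↔ ∀ j, x j ≤ t :=
  ciSup_le_iff (finite_range x).bddAbove

lemma iSup_lt_iff_of_fin {x : Fin n → ℝ} {t : ℝ} : (⨆ j, x j) < t ↔ ∀ j, x j < t := by
  obtain ⟨j₀, hj₀⟩ := exists_eq_ciSup_of_finite (f := x)
  exact ⟨fun h j => (le_ciSup (finite_range x).bddAbove j).trans_lt h,
    fun h => hj₀ ▸ h j₀⟩

lemma measure_pi_iSup_le (μ : Measure ℝ) [SigmaFinite μ] (t : ℝ) :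
    Measure.pi (fun _ : Fin n => μ) {x | (⨆ j, x j) ≤ t} = μ (Iic t) ^ n := by
  have : {x : Fin n → ℝ | (⨆ j, x j) ≤ t} = univ.pi fun _ => Iic t := by
    ext x; simp only [mem_ofPred_eq, mem_univ_pi, mem_Iic, iSup_le_iff_of_fin]
  rw [this, Measure.pi_pi, Finset.prod_const, Finset.card_univ, Fintype.card_fin]

lemma measure_pi_le_iSup (μ : Measure ℝ) [IsProbabilityMeasure μ] (t : ℝ) :
    Measure.pi (fun _ : Fin n => μ) {x | t ≤ ⨆ j, x j} = 1 - μ (Iio t) ^ n := by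
  have : {x : Fin n → ℝ | t ≤ ⨆ j, x j} = (univ.pi fun _ => Iio t)ᶜ := by
    ext x
    simp only [mem_ofPred_eq, mem_compl_iff, mem_univ_pi, mem_Iio, ← iSup_lt_iff_of_fin, not_lt]
  rw [this, prob_compl_eq_one_sub (MeasurableSet.univ_pi fun _ => measurableSet_Iio),
    Measure.pi_pi, Finset.prod_const, Finset.card_univ, Fintype.card_fin]

lemma prod_pi_iSup_le_iSup {m : ℕ} (μ ν : Measure ℝ) [SigmaFinite μ]
    [IsProbabilityMeasure ν] :
    ((Measure.pi fun _ : Fin m => μ).prod (Measure.pi fun _ : Fin n => ν))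
        {ω : (Fin m → ℝ) × (Fin n → ℝ) | (⨆ j, ω.1 j) ≤ ⨆ j, ω.2 j} =
      ∫⁻ t, 1 - ν (Iio t) ^ n ∂(Measure.pi fun _ : Fin m => μ).map fun x => ⨆ j, x j := by
  have hS :
      MeasurableSet {ω : (Fin m → ℝ) × (Fin n → ℝ) | (⨆ j, ω.1 j) ≤ ⨆ j, ω.2 j} :=
    measurableSet_le (measurable_iSup_fin.comp measurable_fst)
      (measurable_iSup_fin.comp measurable_snd)
  rw [Measure.prod_apply hS,
    lintegral_map (((measurable_measure_Iio ν).pow_const n).const_sub 1) measurable_iSup_fin]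
  exact lintegral_congr fun x => measure_pi_le_iSup ν (⨆ j, x j)

end MaxOfSamples

section Uniform

variable {c d : ℝ}

lemma isProbabilityMeasure_uniformIcc (hcd : c < d) : IsProbabilityMeasure (uniformIcc c d) := by
  constructor
  rw [uniformIcc, Measure.smul_apply, Measure.restrict_apply MeasurableSet.univ, univ_inter,
    Real.volume_Icc, smul_eq_mul, ENNReal.inv_mul_cancel (by simpa using hcd) ENNReal.ofReal_ne_top]

lemma uniformIcc_Iic (hcd : c < d) (t : ℝ) :
    uniformIcc c d (Iic t) = ENNReal.ofReal ((min t d - c) / (d - c)) := by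
  rw [uniformIcc, Measure.smul_apply, Measure.restrict_apply measurableSet_Iic, Iic_inter_Icc_eq,
    Real.volume_Icc, smul_eq_mul, ENNReal.ofReal_div_of_pos (sub_pos.2 hcd), div_eq_mul_inv,
    mul_comm]

lemma uniformIcc_Iio (hcd : c < d) (t : ℝ) :
    uniformIcc c d (Iio t) = ENNReal.ofReal ((min t d - c) / (d - c)) := by
  rw [← uniformIcc_Iic hcd, uniformIcc, Measure.smul_apply, Measure.smul_apply,
    measure_congr Iio_ae_eq_Iic]

end Uniform

lemma integral_sub_pow_mul_sub_add_pow (k m : ℕ) (a b h : ℝ) :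
    ∫ t in a..b, (t - a) ^ k * (t - a + h) ^ m =
      ∑ q ∈ Finset.range (m + 1), (m.choose q : ℝ) * h ^ (m - q) * (b - a) ^ (k + q + 1) /
        (k + q + 1) := by
  rw [intervalIntegral.integral_comp_sub_right (fun u => u ^ k * (u + h) ^ m), sub_self]
  simp_rw [add_pow, Finset.mul_sum]
  rw [intervalIntegral.integral_finsetSum fun q _ =>
    (by fun_prop : Continuous _).intervalIntegrable _ _]
  refine Finset.sum_congr rfl fun q _ => ?_
  simp_rw [← mul_assoc, ← pow_add, mul_comm _ (h ^ (m - q)), mul_comm _ (m.choose q : ℝ),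
    mul_assoc]
  rw [intervalIntegral.integral_const_mul, intervalIntegral.integral_const_mul, integral_pow,
    zero_pow (Nat.succ_ne_zero _), sub_zero]
  push_cast
  ring

section MaxDensity

noncomputable def uniformMaxDensity (n : ℕ) (c d t : ℝ) : ℝ :=
  n * (t - c) ^ (n - 1) / (d - c) ^ n

variable {n : ℕ} {a b c d : ℝ}

lemma continuous_uniformMaxDensity : Continuous (uniformMaxDensity n c d) := by
  unfold uniformMaxDensity; fun_prop

lemma uniformMaxDensity_nonneg (hcd : c ≤ d) {t : ℝ} (ht : c ≤ t) :
    0 ≤ uniformMaxDensity n c d t := by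
  unfold uniformMaxDensity
  have := sub_nonneg.2 ht
  have := sub_nonneg.2 hcd
  positivity

lemma integral_uniformMaxDensity (hn : n ≠ 0) (x : ℝ) :
    ∫ t in c..x, uniformMaxDensity n c d t = ((x - c) / (d - c)) ^ n := by
  obtain ⟨k, rfl⟩ := Nat.exists_eq_add_one_of_ne_zero hn
  simp only [uniformMaxDensity, Nat.add_sub_cancel, mul_div_right_comm _ _ ((d - c) ^ _)]
  rw [intervalIntegral.integral_const_mul,
    intervalIntegral.integral_comp_sub_right (fun u => u ^ k), sub_self, integral_pow,
    zero_pow k.succ_ne_zero, sub_zero, div_pow]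
  push_cast
  field_simp

lemma map_iSup_pi_uniformIcc [NeZero n] (hcd : c < d) :
    (Measure.pi fun _ : Fin n => uniformIcc c d).map (fun x => ⨆ j, x j) =
      (volume.restrict (Icc c d)).withDensity
        fun t => ENNReal.ofReal (uniformMaxDensity n c d t) := by
  have := isProbabilityMeasure_uniformIcc hcd
  have := Measure.isProbabilityMeasure_map (μ := Measure.pi fun _ : Fin n => uniformIcc c d)
    measurable_iSup_fin.aemeasurable
  refine Measure.ext_of_Iic _ _ fun s => ?_
  rw [Measure.map_apply measurable_iSup_fin measurableSet_Iic,
    withDensity_apply _ measurableSet_Iic, Measure.restrict_restrict measurableSet_Iic,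
    Iic_inter_Icc_eq,
    show (fun x : Fin n → ℝ => ⨆ j, x j) ⁻¹' Iic s = {x | (⨆ j, x j) ≤ s} from rfl,
    measure_pi_iSup_le, uniformIcc_Iic hcd]
  rcases lt_or_ge s c with hsc | hcs
  · have hneg : (min s d - c) / (d - c) ≤ 0 :=
      div_nonpos_of_nonpos_of_nonneg (by linarith [min_le_left s d]) (by linarith)
    rw [Icc_eq_empty (by linarith [min_le_left s d]), Measure.restrict_empty,
      lintegral_zero_measure, ENNReal.ofReal_of_nonpos hneg, zero_pow (NeZero.ne n)]
  · have hcm : c ≤ min s d := le_min hcs hcd.le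
    rw [← ofReal_integral_eq_lintegral_ofReal continuous_uniformMaxDensity.integrableOn_Icc
        ((ae_restrict_iff' measurableSet_Icc).2 (ae_of_all _ fun t ht =>
          uniformMaxDensity_nonneg hcd.le ht.1)),
      integral_Icc_eq_integral_Ioc, ← intervalIntegral.integral_of_le hcm,
      integral_uniformMaxDensity (NeZero.ne n),
      ENNReal.ofReal_pow (div_nonneg (sub_nonneg.2 hcm) (sub_nonneg.2 hcd.le))]

lemma integral_uniformMaxDensity_mul_div_pow (hn : n ≠ 0) (hac : a ≠ c) (hab : a ≠ b)
    (hcd : c ≠ d) (m : ℕ) :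
    ∫ t in c..b, uniformMaxDensity n c d t * ((t - a) / (b - a)) ^ m =
      ((b - c) / (d - c)) ^ n * (((c - a) / (b - a)) ^ m * n *
        ∑ q ∈ Finset.range (m + 1),
          (m.choose q : ℝ) * ((b - c) / (c - a)) ^ q * (1 / ((n : ℝ) + q))) := by
  obtain ⟨k, rfl⟩ := Nat.exists_eq_add_one_of_ne_zero hn
  have hca : c - a ≠ 0 := sub_ne_zero.2 hac.symm
  have hba : b - a ≠ 0 := sub_ne_zero.2 hab.symm
  have hdc : d - c ≠ 0 := sub_ne_zero.2 hcd.symm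
  have hexpand : ∀ t, uniformMaxDensity (k + 1) c d t * ((t - a) / (b - a)) ^ m =
      (k + 1) / ((d - c) ^ (k + 1) * (b - a) ^ m) * ((t - c) ^ k * (t - c + (c - a)) ^ m) := by
    intro t
    simp only [uniformMaxDensity, Nat.add_sub_cancel, sub_add_sub_cancel, div_pow]
    push_cast
    field_simp
  simp_rw [hexpand]
  rw [intervalIntegral.integral_const_mul, integral_sub_pow_mul_sub_add_pow, Finset.mul_sum,
    Finset.mul_sum, Finset.mul_sum]
  refine Finset.sum_congr rfl fun q hq => ?_
  have hpow : (c - a) ^ m = (c - a) ^ (m - q) * (c - a) ^ q := by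
    rw [← pow_add, Nat.sub_add_cancel (Finset.mem_range_succ_iff.1 hq)]
  rw [div_pow, div_pow, div_pow, hpow,
    show (b - c) ^ (k + q + 1) = (b - c) ^ (k + 1) * (b - c) ^ q by ring]
  push_cast
  field_simp
  ring

lemma integral_uniformMaxDensity_mul_one_sub (hn : n ≠ 0) (hcb : c ≤ b) (hbd : b ≤ d)
    (hab : a ≠ b) (m : ℕ) :
    ∫ t in c..d, uniformMaxDensity n c d t * (1 - ((min t b - a) / (b - a)) ^ m) =
      ((b - c) / (d - c)) ^ n -
        ∫ t in c..b, uniformMaxDensity n c d t * ((t - a) / (b - a)) ^ m := by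
  have hint : ∀ u v, IntervalIntegrable
      (fun t => uniformMaxDensity n c d t * (1 - ((min t b - a) / (b - a)) ^ m)) volume u v :=
    fun u v => (continuous_uniformMaxDensity.mul (by fun_prop)).intervalIntegrable u v
  have hright :
      ∫ t in b..d, uniformMaxDensity n c d t * (1 - ((min t b - a) / (b - a)) ^ m) = 0 := by
    rw [← intervalIntegral.integral_zero]
    refine intervalIntegral.integral_congr fun t ht => ?_
    rw [uIcc_of_le hbd] at ht
    simp [min_eq_right ht.1, div_self (sub_ne_zero.2 hab.symm)]
  have hleft :
      ∫ t in c..b, uniformMaxDensity n c d t * (1 - ((min t b - a) / (b - a)) ^ m) =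
        ∫ t in c..b, (uniformMaxDensity n c d t -
          uniformMaxDensity n c d t * ((t - a) / (b - a)) ^ m) := by
    refine intervalIntegral.integral_congr fun t ht => ?_
    rw [uIcc_of_le hcb] at ht
    simp only [min_eq_left ht.2, mul_one_sub]
  rw [← intervalIntegral.integral_add_adjacent_intervals (hint c b) (hint b d), hright, add_zero,
    hleft, intervalIntegral.integral_sub (f := uniformMaxDensity n c d)
      (g := fun t => uniformMaxDensity n c d t * ((t - a) / (b - a)) ^ m)
      (continuous_uniformMaxDensity.intervalIntegrable _ _)
      ((continuous_uniformMaxDensity.mul (by fun_prop)).intervalIntegrable _ _),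
    integral_uniformMaxDensity hn]

lemma measure_iSup_le_iSup_uniformIcc [NeZero n] {m : ℕ} [NeZero m] (hac : a ≤ c) (hab : a < b)
    (hcd : c < d) :
    (((Measure.pi fun _ : Fin n => uniformIcc c d).prod
        (Measure.pi fun _ : Fin m => uniformIcc a b))
      {ω : (Fin n → ℝ) × (Fin m → ℝ) | (⨆ j, ω.1 j) ≤ ⨆ j, ω.2 j}).toReal =
      ∫ t in c..d, uniformMaxDensity n c d t * (1 - ((min t b - a) / (b - a)) ^ m) := by
  have := isProbabilityMeasure_uniformIcc hab
  have := isProbabilityMeasure_uniformIcc hcd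
  set f := fun t => uniformMaxDensity n c d t * (1 - ((min t b - a) / (b - a)) ^ m)
  have hf_cont : Continuous f := continuous_uniformMaxDensity.mul (by fun_prop)
  have hratio {t} (ht : t ∈ Icc c d) :
      0 ≤ (min t b - a) / (b - a) ∧ (min t b - a) / (b - a) ≤ 1 :=
    ⟨div_nonneg (by linarith [le_min (hac.trans ht.1) hab.le]) (by linarith),
      div_le_one_of_le₀ (by linarith [min_le_right t b]) (by linarith)⟩
  have hf_nonneg {t} (ht : t ∈ Icc c d) : 0 ≤ f t :=
    mul_nonneg (uniformMaxDensity_nonneg hcd.le ht.1)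
      (sub_nonneg.2 (pow_le_one₀ (hratio ht).1 (hratio ht).2))
  have hf_ofReal : EqOn ((fun t => ENNReal.ofReal (uniformMaxDensity n c d t)) *
      fun t => 1 - uniformIcc a b (Iio t) ^ m) (fun t => ENNReal.ofReal (f t)) (Icc c d) := by
    intro t ht
    rw [Pi.mul_apply, uniformIcc_Iio hab, ← ENNReal.ofReal_pow (hratio ht).1,
      ← ENNReal.ofReal_one, ← ENNReal.ofReal_sub _ (pow_nonneg (hratio ht).1 _),
      ← ENNReal.ofReal_mul (uniformMaxDensity_nonneg hcd.le ht.1)]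
  rw [prod_pi_iSup_le_iSup, map_iSup_pi_uniformIcc hcd,
    lintegral_withDensity_eq_lintegral_mul _ continuous_uniformMaxDensity.measurable.ennreal_ofReal
      (((measurable_measure_Iio _).pow_const m).const_sub 1),
    setLIntegral_congr_fun measurableSet_Icc hf_ofReal,
    ← ofReal_integral_eq_lintegral_ofReal hf_cont.integrableOn_Icc
      ((ae_restrict_iff' measurableSet_Icc).2 (ae_of_all _ fun t ht => hf_nonneg ht)),
    ENNReal.toReal_ofReal (setIntegral_nonneg measurableSet_Icc fun t ht => hf_nonneg ht),
    integral_Icc_eq_integral_Ioc, ← intervalIntegral.integral_of_le hcd.le]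

end MaxDensity

theorem stmt5_general (Nb Ni : ℕ) (hNb : 0 < Nb) (hNi : 0 < Ni)
    (ci di cb db : ℝ) (hcicb : ci < cb) (hcbdi : cb < di) (hdidb : di ≤ db) :
    (((Measure.pi fun _ : Fin Nb => uniformIcc cb db).prod
        (Measure.pi fun _ : Fin Ni => uniformIcc ci di))
      {ω : (Fin Nb → ℝ) × (Fin Ni → ℝ) | (⨆ j, ω.1 j) ≤ ⨆ j, ω.2 j}).toReal =
      ((di - cb) / (db - cb)) ^ Nb *
        (1 - ((cb - ci) / (di - ci)) ^ Ni * Nb *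
          ∑ q ∈ Finset.range (Ni + 1),
            (Ni.choose q : ℝ) * ((di - cb) / (cb - ci)) ^ q *
              (1 / ((Nb : ℝ) + q))) := by
  have : NeZero Nb := ⟨hNb.ne'⟩
  have : NeZero Ni := ⟨hNi.ne'⟩
  have hcidi : ci < di := hcicb.trans hcbdi
  have hcbdb : cb < db := hcbdi.trans_le hdidb
  rw [measure_iSup_le_iSup_uniformIcc hcicb.le hcidi hcbdb,
    integral_uniformMaxDensity_mul_one_sub hNb.ne' hcbdi.le hdidb hcidi.ne,
    integral_uniformMaxDensity_mul_div_pow hNb.ne' hcicb.ne hcidi.ne hcbdb.ne, mul_one_sub]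

/-- Exact formula for the probability that the maximum `J_i*` of `N_i` i.i.d.
uniform samples on `[c_i, d_i]` exceeds the maximum `J_b*` of `N_b` i.i.d.
uniform samples on `[c_b, d_b]`, when `c_i < c_b < d_i ≤ d_b`. -/
theorem stmt5 (Nb Ni : ℕ) (hNb : 0 < Nb) (hNi : 0 < Ni)
    (ci di cb db : ℝ) (hcicb : ci < cb) (hcbdi : cb < di) (hdidb : di ≤ db)
    (hcbdb : cb < db) :
    (((Measure.pi fun _ : Fin Nb => uniformIcc cb db).prod
        (Measure.pi fun _ : Fin Ni => uniformIcc ci di))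
      {ω : (Fin Nb → ℝ) × (Fin Ni → ℝ) | (⨆ j, ω.1 j) ≤ ⨆ j, ω.2 j}).toReal =
      ((di - cb) / (db - cb)) ^ Nb *
        (1 - ((cb - ci) / (di - ci)) ^ Ni * Nb *
          ∑ q ∈ Finset.range (Ni + 1),
            (Ni.choose q : ℝ) * ((di - cb) / (cb - ci)) ^ q *
              (1 / ((Nb : ℝ) + q))) :=
  stmt5_general Nb Ni hNb hNi ci di cb db hcicb hcbdi hdidb
end
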